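/- Histogram sampling bound: Let a table of N rows induce bucket probabilities p(1), …, p(B) summing to 1 with max p_max. Draw n uniform i.i.d. samples and let p̂(b) be the empirical bucket frequencies. If n ≥ C·(V/(μ·p_max))²·log(B/δ) for a sufficiently large absolute constant C, then with probability at least 1 − δ the computed pixel heights form a μ-approximate histogram: every bar of height j satisfies p(b) ∈ [(j−1/2−μ)p_max/V, (j+1/2+μ)p_max/V]. -/

import Mathlib

/-!
Each bucket indicator `1[b(x) = b] - p b` takes values in an interval of length one, so by
Hoeffding's lemma it is `1/4`-sub-Gaussian and the empirical frequency `q b` of `n` samples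
satisfies `P(|q b - p b| ≥ ε) ≤ 2 exp(-2nε²)`. A union bound over the `B` buckets with
`ε = μ·pmax/(3V)` shows that all frequencies are `ε`-accurate with probability `≥ 1 - δ` once
`n ε² ≥ log (B/δ)`. On that event the rounding is deterministic: `|qmax - pmax| ≤ ε`, and
`pV - j·pmax = (p - q)V + (qV - j·qmax) + j(qmax - pmax)` is at most `pmax/2 + 3Vε` in absolute
value, since rounding costs `qmax/2` and `|j| ≤ V + 1/2`.
-/

open MeasureTheory ProbabilityTheory Real NNReal Finset
open scoped Classical

section Hoeffding

variable {α : Type*} [MeasurableSpace α] {ν : Measure α} [IsProbabilityMeasure ν] {n : ℕ}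

lemma measureReal_le_sum_le_of_hasSubgaussianMGF {f : α → ℝ} {c : ℝ≥0}
    (hf : HasSubgaussianMGF f c ν) {t : ℝ} (ht : 0 ≤ t) :
    (Measure.pi fun _ : Fin n => ν).real {ω | t ≤ ∑ i, f (ω i)} ≤
      exp (-t ^ 2 / (2 * n * c)) := by
  have h_indep : iIndepFun (fun (i : Fin n) ω ↦ f (ω i)) (Measure.pi fun _ => ν) :=
    iIndepFun_pi fun _ ↦ hf.aemeasurable
  have h_subG (i : Fin n) : HasSubgaussianMGF (fun ω : Fin n → α ↦ f (ω i)) c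
      (Measure.pi fun _ => ν) := by
    refine HasSubgaussianMGF.of_map (Y := Function.eval i) (measurable_pi_apply i).aemeasurable ?_
    rwa [(measurePreserving_eval (fun _ => ν) i).map_eq]
  simpa [mul_assoc] using
    HasSubgaussianMGF.measure_sum_ge_le_of_iIndepFun h_indep (s := univ) (fun i _ ↦ h_subG i) ht

lemma hasSubgaussianMGF_indicator_sub {S : Set α} (hS : MeasurableSet S) :
    HasSubgaussianMGF (fun x ↦ S.indicator 1 x - ν.real S) (1 / 4) ν := by
  have h := hasSubgaussianMGF_of_mem_Icc (μ := ν) (X := S.indicator 1) (a := 0) (b := 1)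
    ((measurable_one.indicator hS).aemeasurable)
    (ae_of_all _ fun x ↦ ⟨Set.indicator_nonneg (fun _ _ ↦ zero_le_one) x,
      Set.indicator_le_self' (fun _ _ ↦ zero_le_one) x⟩)
  rw [integral_indicator_one hS] at h
  convert h using 2
  norm_num

lemma measureReal_le_abs_freq_sub_le {S : Set α} (hS : MeasurableSet S) (hn : 0 < n)
    {ε : ℝ} (hε : 0 ≤ ε) :
    (Measure.pi fun _ : Fin n => ν).real {ω | ε ≤ |(#{i | ω i ∈ S} : ℝ) / n - ν.real S|} ≤
      2 * exp (-2 * n * ε ^ 2) := by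
  have hn' : (0 : ℝ) < n := Nat.cast_pos.2 hn
  have hf := hasSubgaussianMGF_indicator_sub (ν := ν) hS
  have hsum (ω : Fin n → α) :
      ∑ i, (S.indicator 1 (ω i) - ν.real S) = n * ((#{i | ω i ∈ S} : ℝ) / n - ν.real S) := by
    simp only [Finset.sum_sub_distrib, Set.indicator_apply, Pi.one_apply, Finset.sum_boole]
    field_simp
    simp
  have hexp : exp (-(n * ε) ^ 2 / (2 * n * (1 / 4 : ℝ≥0))) = exp (-2 * n * ε ^ 2) := by
    congr 1
    push_cast
    field_simp
    ring
  calc _ ≤ (Measure.pi fun _ : Fin n => ν).real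
        ({ω | n * ε ≤ ∑ i, (S.indicator 1 (ω i) - ν.real S)} ∪
          {ω | n * ε ≤ ∑ i, -(S.indicator 1 (ω i) - ν.real S)}) := by
        refine measureReal_mono fun ω hω ↦ ?_
        simp only [Set.mem_ofPred_eq, Set.mem_union, Finset.sum_neg_distrib, hsum] at hω ⊢
        rcases le_abs'.1 hω with h | h
        · right; nlinarith
        · left; nlinarith
    _ ≤ exp (-(n * ε) ^ 2 / (2 * n * (1 / 4 : ℝ≥0))) +
          exp (-(n * ε) ^ 2 / (2 * n * (1 / 4 : ℝ≥0))) :=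
        (measureReal_union_le _ _).trans <| add_le_add
          (measureReal_le_sum_le_of_hasSubgaussianMGF hf (by positivity))
          (measureReal_le_sum_le_of_hasSubgaussianMGF (f := fun x ↦ -(S.indicator 1 x - ν.real S))
            hf.neg (by positivity))
    _ = 2 * exp (-2 * n * ε ^ 2) := by rw [hexp, two_mul]

variable {β : Type*} [Fintype β] [DecidableEq β] [MeasurableSpace β]
  [MeasurableSingletonClass β] {f : α → β}

lemma measureReal_exists_le_abs_freq_sub_le (hf : Measurable f) (hn : 0 < n) {ε : ℝ}
    (hε : 0 ≤ ε) :
    (Measure.pi fun _ : Fin n => ν).real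
        {ω | ∃ b, ε ≤ |(#{i | f (ω i) = b} : ℝ) / n - ν.real (f ⁻¹' {b})|} ≤
      Fintype.card β * (2 * exp (-2 * n * ε ^ 2)) := by
  have hbad : {ω : Fin n → α | ∃ b, ε ≤ |(#{i | f (ω i) = b} : ℝ) / n - ν.real (f ⁻¹' {b})|} =
      ⋃ b, {ω | ε ≤ |(#{i | ω i ∈ f ⁻¹' {b}} : ℝ) / n - ν.real (f ⁻¹' {b})|} := by
    ext ω
    simp
  rw [hbad]
  refine (measureReal_iUnion_fintype_le _).trans ?_
  refine (Finset.sum_le_sum fun b _ ↦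
    measureReal_le_abs_freq_sub_le (ν := ν) (hf (measurableSet_singleton b)) hn hε).trans_eq ?_
  rw [Finset.sum_const, Finset.card_univ, nsmul_eq_mul]

lemma measureReal_exists_le_abs_freq_sub_le_of_log_le (hf : Measurable f) (hn : 0 < n)
    {ε δ : ℝ} (hε : 0 < ε) (hδ0 : 0 < δ) (hδ1 : δ ≤ 1)
    (hlog : log (Fintype.card β / δ) ≤ n * ε ^ 2) :
    (Measure.pi fun _ : Fin n => ν).real
        {ω | ∃ b, ε ≤ |(#{i | f (ω i) = b} : ℝ) / n - ν.real (f ⁻¹' {b})|} ≤ δ := by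
  rcases subsingleton_or_nontrivial β with hβ | hβ
  -- with a single fiber the factor `2` of the two-sided bound is not absorbed, but then
  -- every empirical frequency is exact
  · have hfreq (ω : Fin n → α) (b : β) :
        (#{i | f (ω i) = b} : ℝ) / n - ν.real (f ⁻¹' {b}) = 0 := by
      rw [Finset.filter_true_of_mem fun i _ ↦ Subsingleton.elim _ _,
        (Set.eq_univ_of_forall fun x ↦ Subsingleton.elim (f x) b : f ⁻¹' {b} = Set.univ)]
      simp [hn.ne']
    simp [hfreq, not_le.2 hε, hδ0.le]
  · have hB : (2 : ℝ) ≤ Fintype.card β := by exact_mod_cast Fintype.one_lt_card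
    have hexp : exp (-2 * n * ε ^ 2) ≤ (δ / Fintype.card β) ^ 2 := by
      calc exp (-2 * n * ε ^ 2) ≤ exp (-log (Fintype.card β / δ)) ^ 2 := by
            rw [← exp_nat_mul, exp_le_exp]; push_cast; linarith
        _ = (δ / Fintype.card β) ^ 2 := by
            rw [exp_neg, exp_log (by positivity), inv_div]
    refine (measureReal_exists_le_abs_freq_sub_le hf hn hε.le).trans ?_
    calc (Fintype.card β : ℝ) * (2 * exp (-2 * n * ε ^ 2))
        ≤ Fintype.card β * (2 * (δ / Fintype.card β) ^ 2) := by gcongr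
      _ = 2 / Fintype.card β * δ * δ := by field_simp
      _ ≤ 1 * 1 * δ := by gcongr; rwa [div_le_one (by positivity)]
      _ = δ := by ring

end Hoeffding

section Rounding

variable {V μ ε : ℝ}

lemma abs_mul_sub_round_mul_le {p q pmax qmax : ℝ} (hV : 1 ≤ V) (hq : 0 ≤ q)
    (hqmax : q ≤ qmax) (hqmax0 : 0 < qmax) (hpq : |q - p| ≤ ε) (hmax : |qmax - pmax| ≤ ε)
    (hε : 3 * V * ε ≤ μ * pmax) :
    |p * V - round (q * V / qmax) * pmax| ≤ (1 / 2 + μ) * pmax := by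
  set r := q * V / qmax
  set j : ℝ := (round r : ℝ)
  have hr : |r| ≤ V := by
    rw [abs_of_nonneg (by positivity), div_le_iff₀ hqmax0]
    nlinarith
  have hj : |j| ≤ V + 1 / 2 := by
    have h1 := abs_le.1 hr
    have h2 := abs_le.1 (abs_sub_round r)
    exact abs_le.2 ⟨by linarith, by linarith⟩
  have hround : |q * V - j * qmax| ≤ qmax / 2 := by
    have : q * V - j * qmax = (r - j) * qmax := by simp only [r]; field_simp
    rw [this, abs_mul, abs_of_pos hqmax0]
    nlinarith [abs_sub_round r]
  have hε0 : 0 ≤ ε := (abs_nonneg _).trans hpq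
  calc |p * V - j * pmax|
      = |(p - q) * V + (q * V - j * qmax) + j * (qmax - pmax)| := by congr 1; ring
    _ ≤ |(p - q) * V| + |q * V - j * qmax| + |j * (qmax - pmax)| := abs_add_three _ _ _
    _ = |p - q| * V + |q * V - j * qmax| + |j| * |qmax - pmax| := by
        rw [abs_mul, abs_mul, abs_of_nonneg (by linarith : 0 ≤ V)]
    _ ≤ ε * V + (pmax + ε) / 2 + (V + 1 / 2) * ε := by
        gcongr
        · rwa [abs_sub_comm]
        · linarith [le_abs_self (qmax - pmax)]
    _ ≤ (1 / 2 + μ) * pmax := by nlinarith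

def IsApproxBar (μ V pmax p : ℝ) (j : ℤ) : Prop :=
  (j - 1 / 2 - μ) * pmax / V ≤ p ∧ p ≤ (j + 1 / 2 + μ) * pmax / V

lemma isApproxBar_of_abs_mul_sub_le {pmax p : ℝ} {j : ℤ} (hV : 0 < V)
    (h : |p * V - j * pmax| ≤ (1 / 2 + μ) * pmax) : IsApproxBar μ V pmax p j := by
  obtain ⟨h₁, h₂⟩ := abs_le.1 h
  constructor
  · rw [div_le_iff₀ hV]; linarith
  · rw [le_div_iff₀ hV]; linarith

lemma abs_sup'_sub_sup'_le {ι : Type*} {s : Finset ι} (hs : s.Nonempty) {p q : ι → ℝ}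
    (h : ∀ b ∈ s, |q b - p b| ≤ ε) : |s.sup' hs q - s.sup' hs p| ≤ ε := by
  refine abs_sub_le_iff.2 ⟨sub_le_iff_le_add.2 <| sup'_le hs q fun b hb ↦ ?_,
    sub_le_iff_le_add.2 <| sup'_le hs p fun b hb ↦ ?_⟩
  · linarith [(abs_sub_le_iff.1 (h b hb)).1, le_sup' p hb]
  · linarith [(abs_sub_le_iff.1 (h b hb)).2, le_sup' q hb]

theorem isApproxBar_round_of_abs_sub_le {ι : Type*} {s : Finset ι} (hs : s.Nonempty)
    {p q : ι → ℝ} (hV : 1 ≤ V) (hq : ∀ b ∈ s, 0 ≤ q b) (hpq : ∀ b ∈ s, |q b - p b| ≤ ε)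
    (hε : 3 * V * ε ≤ μ * s.sup' hs p) (hεp : ε < s.sup' hs p) {b : ι} (hb : b ∈ s) :
    IsApproxBar μ V (s.sup' hs p) (p b) (round (q b * V / s.sup' hs q)) := by
  have hmax := abs_sup'_sub_sup'_le hs hpq
  have hqmax0 : 0 < s.sup' hs q := by linarith [(abs_sub_le_iff.1 hmax).2]
  exact isApproxBar_of_abs_mul_sub_le (by linarith) <|
    abs_mul_sub_round_mul_le hV (hq b hb) (le_sup' q hb) hqmax0 (hpq b hb) hmax hε

end Rounding

lemma measureReal_uniformOfFintype {α : Type*} [Fintype α] [Nonempty α] [MeasurableSpace α]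
    {s : Set α} (hs : MeasurableSet s) :
    (PMF.uniformOfFintype α).toMeasure.real s = #{x | x ∈ s} / Fintype.card α := by
  simp [measureReal_def, PMF.toMeasure_uniformOfFintype_apply s hs, Fintype.card_subtype]

lemma ofReal_one_sub_le_measure_compl {Ω : Type*} [MeasurableSpace Ω] {P : Measure Ω}
    [IsProbabilityMeasure P] {s : Set Ω} {δ : ℝ} (h : P.real s ≤ δ) :
    ENNReal.ofReal (1 - δ) ≤ P sᶜ := by
  calc ENNReal.ofReal (1 - δ) = 1 - ENNReal.ofReal δ := by
        rw [ENNReal.ofReal_sub _ (measureReal_nonneg.trans h), ENNReal.ofReal_one]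
    _ ≤ 1 - P s := by
        gcongr
        rw [← ofReal_measureReal]
        exact ENNReal.ofReal_le_ofReal h
    _ ≤ P sᶜ := by
        rw [tsub_le_iff_left, ← measure_univ (μ := P)]
        exact measure_univ_le_add_compl s

/-- Histogram sampling bound (Hillview, Theorem 3). A table of `N = M+1` rows with bucket
assignment `bucket` induces bucket probabilities `p b` with maximum `pmax`. With
`n ≥ C·(V/(μ·pmax))²·log(B/δ)` uniform i.i.d. samples, with probability at least `1 - δ`
the pixel heights obtained by rounding `p̂ b·V/p̂max` form a `μ`-approximate histogram:
every bar of height `j` satisfies `p b ∈ [(j-1/2-μ)·pmax/V, (j+1/2+μ)·pmax/V]`. -/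
theorem histogram_sampling_bound :
    ∃ C : ℝ, 0 < C ∧
      ∀ (M B V n : ℕ) (hB : 0 < B), 0 < V → 0 < n →
      ∀ (bucket : Fin (M + 1) → Fin B) (μ δ : ℝ),
        0 < μ → μ < 1 / 2 → 0 < δ → δ < 1 →
      ∀ pmax : ℝ,
        pmax = Finset.univ.sup' ⟨⟨0, hB⟩, Finset.mem_univ _⟩
          (fun b => ((Finset.univ.filter fun i : Fin (M + 1) => bucket i = b).card : ℝ)
            / (M + 1)) →
        (n : ℝ) ≥ C * ((V : ℝ) / (μ * pmax)) ^ 2 * Real.log (B / δ) →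
        ENNReal.ofReal (1 - δ) ≤
          (Measure.pi fun _ : Fin n => (PMF.uniformOfFintype (Fin (M + 1))).toMeasure)
            {ω : Fin n → Fin (M + 1) | ∀ b : Fin B,
              -- the pixel height assigned to bucket `b` from the empirical frequencies
              ∀ jb : ℤ,
                jb = round
                  ((((Finset.univ.filter fun i : Fin n => bucket (ω i) = b).card : ℝ) / n)
                    * V /
                    (Finset.univ.sup' ⟨⟨0, hB⟩, Finset.mem_univ _⟩
                      (fun b' =>
                        ((Finset.univ.filter fun i : Fin n => bucket (ω i) = b').card : ℝ)
                          / n))) →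
                (((jb : ℝ) - 1 / 2 - μ) * pmax / V ≤
                    ((Finset.univ.filter fun i : Fin (M + 1) => bucket i = b).card : ℝ)
                      / (M + 1) ∧
                  ((Finset.univ.filter fun i : Fin (M + 1) => bucket i = b).card : ℝ)
                      / (M + 1) ≤ ((jb : ℝ) + 1 / 2 + μ) * pmax / V)} := by
  refine ⟨9, by norm_num, ?_⟩
  intro M B V n hB hV hn bucket μ δ hμ0 hμ1 hδ0 hδ1 pmax hpmax hn'
  set p : Fin B → ℝ := fun b ↦ #{i | bucket i = b} / (M + 1)
  have hp (b : Fin B) :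
      (PMF.uniformOfFintype (Fin (M + 1))).toMeasure.real (bucket ⁻¹' {b}) = p b := by
    simp [measureReal_uniformOfFintype, p]
  have hpmax0 : 0 < pmax := by
    refine hpmax ▸ lt_of_lt_of_le ?_ (le_sup' p (mem_univ (bucket 0)))
    exact div_pos (Nat.cast_pos.2 (card_pos.2 ⟨0, by simp⟩)) (by positivity)
  have hV1 : (1 : ℝ) ≤ V := Nat.one_le_cast.2 hV
  set ε := μ * pmax / (3 * V)
  have hε0 : 0 < ε := by positivity
  have hεV : 3 * V * ε ≤ μ * pmax := le_of_eq (by simp only [ε]; field_simp)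
  have hεp : ε < pmax := by nlinarith
  have hlog : log (B / δ) ≤ n * ε ^ 2 := by
    calc log (B / δ) = 9 * (V / (μ * pmax)) ^ 2 * log (B / δ) * ε ^ 2 := by
          simp only [ε]; field_simp; ring
      _ ≤ n * ε ^ 2 := by gcongr
  have hbad := measureReal_exists_le_abs_freq_sub_le_of_log_le
    (ν := (PMF.uniformOfFintype (Fin (M + 1))).toMeasure) (f := bucket)
    (measurable_of_finite _) hn hε0 hδ0 hδ1.le (by simpa using hlog)
  refine (ofReal_one_sub_le_measure_compl hbad).trans (measure_mono ?_)
  intro ω hω b j hj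
  simp only [Set.mem_compl_iff, Set.mem_ofPred_eq, not_exists, not_le, hp] at hω
  subst hj hpmax
  exact isApproxBar_round_of_abs_sub_le (p := p)
    (q := fun b ↦ (#{i | bucket (ω i) = b} : ℝ) / n) _ hV1 (fun b _ ↦ by positivity)
    (fun b _ ↦ (hω b).le) hεV hεp (mem_univ b)
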